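/- Let H be an n×n heptadiagonal matrix (n > 4) with g_i ≠ 0 for 1 ≤ i ≤ n-3, and let A, B, C be the three solutions of the seven-term recurrence with initial triples (0,0,1), (0,1,0), (1,0,0). Then H is invertible if and only if X_{n+1} ≠ 0, where X_{n+1} = det [[A_{n+1}, A_{n+2}, A_{n+3}], [B_{n+1}, B_{n+2}, B_{n+3}], [C_{n+1}, C_{n+2}, C_{n+3}]]. -/

import Mathlib

open Matrix

/-- The `n × n` heptadiagonal matrix of (1.1), with 1-indexed diagonal sequences
`a, b, c, d, e, f, g : ℤ → ℝ` (entry `H i j` with `i, j : Fin n` corresponds to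
row `i+1`, column `j+1` in the paper's indexing). -/
def heptaMatrix (n : ℕ) (a b c d e f g : ℤ → ℝ) : Matrix (Fin n) (Fin n) ℝ :=
  fun i j =>
    if ((j : ℤ) + 1) = ((i : ℤ) + 1) - 3 then a ((i : ℤ) + 1)
    else if ((j : ℤ) + 1) = ((i : ℤ) + 1) - 2 then b ((i : ℤ) + 1)
    else if ((j : ℤ) + 1) = ((i : ℤ) + 1) - 1 then c ((i : ℤ) + 1)
    else if ((j : ℤ) + 1) = ((i : ℤ) + 1) then d ((i : ℤ) + 1)
    else if ((j : ℤ) + 1) = ((i : ℤ) + 1) + 1 then e ((i : ℤ) + 1)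
    else if ((j : ℤ) + 1) = ((i : ℤ) + 1) + 2 then f ((i : ℤ) + 1)
    else if ((j : ℤ) + 1) = ((i : ℤ) + 1) + 3 then g ((i : ℤ) + 1)
    else 0

/-- `W : ℤ → ℝ` satisfies the seven-term recurrence
`aᵢ W_{i-3} + bᵢ W_{i-2} + cᵢ W_{i-1} + dᵢ Wᵢ + eᵢ W_{i+1} + fᵢ W_{i+2} + gᵢ W_{i+3} = 0`
for `1 ≤ i ≤ n`, with out-of-range terms (index `≤ 0`) treated as zero. -/
def SevenTermRec (n : ℕ) (a b c d e f g : ℤ → ℝ) (W : ℤ → ℝ) : Prop :=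
  (∀ j : ℤ, j ≤ 0 → W j = 0) ∧
  (∀ i : ℤ, 1 ≤ i → i ≤ (n : ℤ) →
    a i * W (i - 3) + b i * W (i - 2) + c i * W (i - 1) + d i * W i +
      e i * W (i + 1) + f i * W (i + 2) + g i * W (i + 3) = 0)

/-- The `k`-th standard basis vector of `ℝⁿ` (1-indexed `k`). -/
def stdBasis (n : ℕ) (k : ℤ) : Fin n → ℝ := fun i => if ((i : ℤ) + 1) = k then 1 else 0

/-- The 3×3 determinant with rows formed from `A`, `B`, `C` at indices `p`, `q`, `r`. -/
def det3 (A B C : ℤ → ℝ) (p q r : ℤ) : ℝ :=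
  Matrix.det !![A p, A q, A r; B p, B q, B r; C p, C q, C r]

/-- The `k`-th column (1-indexed, `1 ≤ k ≤ n`) of a matrix, as a vector; `0` out of range. -/
def matCol (n : ℕ) (M : Matrix (Fin n) (Fin n) ℝ) (k : ℤ) : Fin n → ℝ :=
  fun i => if hk : 1 ≤ k ∧ k ≤ (n : ℤ) then M i ⟨(k - 1).toNat, by omega⟩ else 0

/-!
Both conditions say that the recurrence has a nonzero solution vanishing at `n + 1, n + 2, n + 3`.
Such a solution, restricted to `1, …, n`, is a kernel vector of `H`, and a kernel vector of `H`,
extended by zero, is such a solution. As `g i ≠ 0` for `1 ≤ i ≤ n`, a solution `W` is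
determined up to index `n + 3` by `W 1, W 2, W 3`, so it equals `W 3 • A + W 2 • B + W 1 • C`
there and vanishes at `n + 1, n + 2, n + 3` exactly when `(W 3, W 2, W 1)` is in the left kernel
of the matrix of `det3`.
-/

def zeroExt {n : ℕ} (x : Fin n → ℝ) (k : ℤ) : ℝ :=
  if hk : 1 ≤ k ∧ k ≤ (n : ℤ) then x ⟨(k - 1).toNat, by omega⟩ else 0

def heptaRow (a b c d e f g W : ℤ → ℝ) (i : ℤ) : ℝ :=
  a i * W (i - 3) + b i * W (i - 2) + c i * W (i - 1) + d i * W i +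
    e i * W (i + 1) + f i * W (i + 2) + g i * W (i + 3)

theorem exists_fin_coe_add_one_eq {n : ℕ} {k : ℤ} (h1 : 1 ≤ k) (h2 : k ≤ n) :
    ∃ i : Fin n, (i : ℤ) + 1 = k :=
  ⟨⟨(k - 1).toNat, by omega⟩, show ((k - 1).toNat : ℤ) + 1 = k by omega⟩

section zeroExt

variable {n : ℕ} (x : Fin n → ℝ)

theorem zeroExt_natCast_add_one (i : Fin n) : zeroExt x ((i : ℤ) + 1) = x i := by
  rw [zeroExt, dif_pos (by omega)]
  congr
  simp

theorem zeroExt_of_not_mem {k : ℤ} (hk : ¬(1 ≤ k ∧ k ≤ (n : ℤ))) : zeroExt x k = 0 :=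
  dif_neg hk

@[simp]
theorem zeroExt_zero : zeroExt (0 : Fin n → ℝ) = 0 := by
  funext k
  simp [zeroExt]

theorem zeroExt_eq_sum (k : ℤ) :
    zeroExt x k = ∑ j : Fin n, if (j : ℤ) + 1 = k then x j else 0 := by
  by_cases hk : 1 ≤ k ∧ k ≤ (n : ℤ)
  · obtain ⟨i, rfl⟩ := exists_fin_coe_add_one_eq hk.1 hk.2
    simp [zeroExt_natCast_add_one, Fin.val_inj]
  · rw [zeroExt_of_not_mem x hk, eq_comm]
    exact Finset.sum_eq_zero fun j _ => if_neg (by omega)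

theorem zeroExt_restrict {W : ℤ → ℝ} (hW : ∀ j : ℤ, j ≤ 0 → W j = 0) {k : ℤ} (hk : k ≤ n) :
    zeroExt (fun i : Fin n => W ((i : ℤ) + 1)) k = W k := by
  by_cases h : 1 ≤ k
  · obtain ⟨i, rfl⟩ := exists_fin_coe_add_one_eq h hk
    exact zeroExt_natCast_add_one _ i
  · rw [zeroExt_of_not_mem _ (by omega), hW k (by omega)]

end zeroExt

theorem heptaMatrix_mulVec_apply {n : ℕ} (a b c d e f g : ℤ → ℝ) (x : Fin n → ℝ) (i : Fin n) :
    (heptaMatrix n a b c d e f g *ᵥ x) i = heptaRow a b c d e f g (zeroExt x) ((i : ℤ) + 1) := by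
  simp only [heptaRow, zeroExt_eq_sum, Finset.mul_sum, ← Finset.sum_add_distrib, mulVec,
    dotProduct]
  refine Finset.sum_congr rfl fun j _ => ?_
  unfold heptaMatrix
  split_ifs <;> first | (exfalso; omega) | ring

theorem heptaRow_congr (a b c d e f g : ℤ → ℝ) {V W : ℤ → ℝ} {i : ℤ}
    (h : ∀ k ≤ i + 3, V k = W k) : heptaRow a b c d e f g V i = heptaRow a b c d e f g W i := by
  simp only [heptaRow, h (i - 3) (by omega), h (i - 2) (by omega), h (i - 1) (by omega),
    h i (by omega), h (i + 1) (by omega), h (i + 2) (by omega), h (i + 3) le_rfl]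

namespace SevenTermRec

variable {n : ℕ} {a b c d e f g A B C V W : ℤ → ℝ}

theorem heptaRow_eq_zero (hW : SevenTermRec n a b c d e f g W) {i : ℤ} (h1 : 1 ≤ i)
    (h2 : i ≤ n) : heptaRow a b c d e f g W i = 0 :=
  hW.2 i h1 h2

theorem add (hV : SevenTermRec n a b c d e f g V) (hW : SevenTermRec n a b c d e f g W) :
    SevenTermRec n a b c d e f g (V + W) :=
  ⟨fun j hj => by simp [hV.1 j hj, hW.1 j hj], fun i h1 h2 => by
    simp only [Pi.add_apply]
    linear_combination hV.2 i h1 h2 + hW.2 i h1 h2⟩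

theorem smul (r : ℝ) (hW : SevenTermRec n a b c d e f g W) :
    SevenTermRec n a b c d e f g (r • W) :=
  ⟨fun j hj => by simp [hW.1 j hj], fun i h1 h2 => by
    simp only [Pi.smul_apply, smul_eq_mul]
    linear_combination r * hW.2 i h1 h2⟩

theorem eq_of_initial (hg : ∀ i : ℤ, 1 ≤ i → i ≤ n → g i ≠ 0)
    (hV : SevenTermRec n a b c d e f g V) (hW : SevenTermRec n a b c d e f g W)
    (h1 : V 1 = W 1) (h2 : V 2 = W 2) (h3 : V 3 = W 3) {k : ℤ} (hk : k ≤ n + 3) :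
    V k = W k := by
  suffices ∀ m : ℕ, ∀ k : ℤ, k ≤ m + 3 → k ≤ n + 3 → V k = W k from this n k hk hk
  intro m
  induction m with
  | zero =>
    intro k hk _
    rcases (by omega : k ≤ 0 ∨ k = 1 ∨ k = 2 ∨ k = 3) with hk | rfl | rfl | rfl
    exacts [(hV.1 k hk).trans (hW.1 k hk).symm, h1, h2, h3]
  | succ m ih =>
    intro k hk hkn
    obtain hk | rfl := (by omega : k ≤ m + 3 ∨ k = m + 1 + 3)
    · exact ih k hk hkn
    have hrow : heptaRow a b c d e f g V (m + 1) - heptaRow a b c d e f g W (m + 1) = 0 := by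
      rw [hV.heptaRow_eq_zero (by omega) (by omega), hW.heptaRow_eq_zero (by omega) (by omega),
        sub_zero]
    have hlow : ∀ j ≤ (m : ℤ) + 3, V j = W j := fun j hj => ih j hj (by omega)
    simp only [heptaRow, hlow (m + 1 - 3) (by omega), hlow (m + 1 - 2) (by omega),
      hlow (m + 1 - 1) (by omega), hlow (m + 1) (by omega), hlow (m + 1 + 1) (by omega),
      hlow (m + 1 + 2) (by omega)] at hrow
    have hgm := hg (m + 1) (by omega) (by omega)
    have : g (m + 1) * (V (m + 1 + 3) - W (m + 1 + 3)) = 0 := by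
      linear_combination hrow
    exact sub_eq_zero.1 ((mul_eq_zero.1 this).resolve_left hgm)

theorem eq_combination (hW : SevenTermRec n a b c d e f g W)
    (hg : ∀ i : ℤ, 1 ≤ i → i ≤ n → g i ≠ 0)
    (hA : SevenTermRec n a b c d e f g A) (hA1 : A 1 = 0) (hA2 : A 2 = 0) (hA3 : A 3 = 1)
    (hB : SevenTermRec n a b c d e f g B) (hB1 : B 1 = 0) (hB2 : B 2 = 1) (hB3 : B 3 = 0)
    (hC : SevenTermRec n a b c d e f g C) (hC1 : C 1 = 1) (hC2 : C 2 = 0) (hC3 : C 3 = 0)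
    {k : ℤ} (hk : k ≤ n + 3) :
    W k = (W 3 • A + W 2 • B + W 1 • C) k :=
  hW.eq_of_initial hg (((hA.smul _).add (hB.smul _)).add (hC.smul _))
    (by simp [hA1, hB1, hC1]) (by simp [hA2, hB2, hC2]) (by simp [hA3, hB3, hC3]) hk

end SevenTermRec

theorem sevenTermRec_zeroExt_of_mulVec_eq_zero {n : ℕ} {a b c d e f g : ℤ → ℝ} {x : Fin n → ℝ}
    (hx : heptaMatrix n a b c d e f g *ᵥ x = 0) : SevenTermRec n a b c d e f g (zeroExt x) := by
  refine ⟨fun j hj => zeroExt_of_not_mem x (by omega), fun i h1 h2 => ?_⟩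
  obtain ⟨j, rfl⟩ := exists_fin_coe_add_one_eq h1 h2
  exact (heptaMatrix_mulVec_apply a b c d e f g x j).symm.trans (congrFun hx j)

theorem heptaMatrix_mulVec_restrict_eq_zero {n : ℕ} {a b c d e f g W : ℤ → ℝ}
    (hW : SevenTermRec n a b c d e f g W)
    (h1 : W (n + 1) = 0) (h2 : W (n + 2) = 0) (h3 : W (n + 3) = 0) :
    heptaMatrix n a b c d e f g *ᵥ (fun i : Fin n => W ((i : ℤ) + 1)) = 0 := by
  funext i
  have hi := i.isLt
  rw [heptaMatrix_mulVec_apply, Pi.zero_apply,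
    ← hW.heptaRow_eq_zero (i := (i : ℤ) + 1) (by omega) (by omega)]
  refine heptaRow_congr a b c d e f g fun k hk => ?_
  rcases (by omega : k ≤ n ∨ k = n + 1 ∨ k = n + 2 ∨ k = n + 3) with hk | rfl | rfl | rfl
  · exact zeroExt_restrict hW.1 hk
  all_goals rw [zeroExt_of_not_mem _ (by omega)]
  exacts [h1.symm, h2.symm, h3.symm]

theorem det3_eq_zero_iff (A B C : ℤ → ℝ) (p q r : ℤ) :
    det3 A B C p q r = 0 ↔ ∃ u v w : ℝ, (u, v, w) ≠ 0 ∧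
      (u • A + v • B + w • C) p = 0 ∧ (u • A + v • B + w • C) q = 0 ∧
        (u • A + v • B + w • C) r = 0 := by
  have hvecMul (u v w : ℝ) : ![u, v, w] ᵥ* !![A p, A q, A r; B p, B q, B r; C p, C q, C r] =
      ![(u • A + v • B + w • C) p, (u • A + v • B + w • C) q, (u • A + v • B + w • C) r] := by
    ext j
    fin_cases j <;> simp [vecMul, dotProduct, Fin.sum_univ_three]
  rw [det3, ← exists_vecMul_eq_zero_iff]
  constructor
  · rintro ⟨x, hx0, hx⟩
    obtain ⟨u, v, w, rfl⟩ : ∃ u v w : ℝ, x = ![u, v, w] :=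
      ⟨x 0, x 1, x 2, by ext i; fin_cases i <;> rfl⟩
    refine ⟨u, v, w, fun h => hx0 ?_, ?_⟩
    · simp_all
    · simpa [hvecMul] using hx
  · rintro ⟨u, v, w, h0, hp, hq, hr⟩
    refine ⟨![u, v, w], fun h => h0 ?_, ?_⟩
    · simp_all
    · simp [hvecMul, hp, hq, hr]

section FundamentalSolutions

variable {n : ℕ} {a b c d e f g A B C : ℤ → ℝ}

theorem det3_eq_zero_of_mulVec_eq_zero (hg : ∀ i : ℤ, 1 ≤ i → i ≤ n → g i ≠ 0)
    (hA : SevenTermRec n a b c d e f g A) (hA1 : A 1 = 0) (hA2 : A 2 = 0) (hA3 : A 3 = 1)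
    (hB : SevenTermRec n a b c d e f g B) (hB1 : B 1 = 0) (hB2 : B 2 = 1) (hB3 : B 3 = 0)
    (hC : SevenTermRec n a b c d e f g C) (hC1 : C 1 = 1) (hC2 : C 2 = 0) (hC3 : C 3 = 0)
    {x : Fin n → ℝ} (hx0 : x ≠ 0) (hx : heptaMatrix n a b c d e f g *ᵥ x = 0) :
    det3 A B C (n + 1) (n + 2) (n + 3) = 0 := by
  have hcomb {k : ℤ} (hk : k ≤ n + 3) :=
    (sevenTermRec_zeroExt_of_mulVec_eq_zero hx).eq_combination
      hg hA hA1 hA2 hA3 hB hB1 hB2 hB3 hC hC1 hC2 hC3 hk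
  rw [det3_eq_zero_iff]
  refine ⟨zeroExt x 3, zeroExt x 2, zeroExt x 1, fun h => hx0 ?_, ?_, ?_, ?_⟩
  · simp only [Prod.mk_eq_zero] at h
    funext i
    simpa [zeroExt_natCast_add_one, h] using hcomb (k := (i : ℤ) + 1) (by omega)
  all_goals rw [← hcomb (by omega), zeroExt_of_not_mem _ (by omega)]

theorem exists_mulVec_eq_zero_of_det3_eq_zero (hn : 3 ≤ n)
    (hA : SevenTermRec n a b c d e f g A) (hA3 : A 3 = 1)
    (hB : SevenTermRec n a b c d e f g B) (hB2 : B 2 = 1) (hB3 : B 3 = 0)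
    (hC : SevenTermRec n a b c d e f g C) (hC1 : C 1 = 1) (hC2 : C 2 = 0) (hC3 : C 3 = 0)
    (h : det3 A B C (n + 1) (n + 2) (n + 3) = 0) :
    ∃ x ≠ 0, heptaMatrix n a b c d e f g *ᵥ x = 0 := by
  obtain ⟨u, v, w, huvw, h1, h2, h3⟩ := (det3_eq_zero_iff A B C _ _ _).1 h
  have hW := ((hA.smul u).add (hB.smul v)).add (hC.smul w)
  refine ⟨_, fun hx0 => huvw ?_, heptaMatrix_mulVec_restrict_eq_zero hW h1 h2 h3⟩
  have hW0 {k : ℤ} (hk : k ≤ n) : (u • A + v • B + w • C) k = 0 := by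
    rw [← zeroExt_restrict hW.1 hk, hx0, zeroExt_zero, Pi.zero_apply]
  have hW3 := hW0 (k := 3) (by omega)
  have hW2 := hW0 (k := 2) (by omega)
  have hW1 := hW0 (k := 1) (by omega)
  simp_all

end FundamentalSolutions

theorem stmt_10_general (n : ℕ) (hn : 4 < n) (a b c d e f g A B C : ℤ → ℝ)
    (hg : ∀ i : ℤ, 1 ≤ i → i ≤ (n : ℤ) - 3 → g i ≠ 0)
    (hg1 : g ((n : ℤ) - 2) = 1) (hg2 : g ((n : ℤ) - 1) = 1) (hg3 : g (n : ℤ) = 1)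
    (hA : SevenTermRec n a b c d e f g A) (hA1 : A 1 = 0) (hA2 : A 2 = 0) (hA3 : A 3 = 1)
    (hB : SevenTermRec n a b c d e f g B) (hB1 : B 1 = 0) (hB2 : B 2 = 1) (hB3 : B 3 = 0)
    (hC : SevenTermRec n a b c d e f g C) (hC1 : C 1 = 1) (hC2 : C 2 = 0) (hC3 : C 3 = 0) :
    IsUnit (heptaMatrix n a b c d e f g).det ↔
      det3 A B C ((n : ℤ) + 1) ((n : ℤ) + 2) ((n : ℤ) + 3) ≠ 0 := by
  have hg_ne : ∀ i : ℤ, 1 ≤ i → i ≤ n → g i ≠ 0 := by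
    intro i h1 h2
    rcases (by omega : i ≤ n - 3 ∨ i = n - 2 ∨ i = n - 1 ∨ i = n) with h | rfl | rfl | rfl
    exacts [hg i h1 h, by simp [hg1], by simp [hg2], by simp [hg3]]
  rw [isUnit_iff_ne_zero, not_iff_not, ← exists_mulVec_eq_zero_iff]
  constructor
  · rintro ⟨x, hx0, hx⟩
    exact det3_eq_zero_of_mulVec_eq_zero hg_ne hA hA1 hA2 hA3 hB hB1 hB2 hB3 hC hC1 hC2 hC3 hx0 hx
  · exact exists_mulVec_eq_zero_of_det3_eq_zero (by omega) hA hA3 hB hB2 hB3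
      hC hC1 hC2 hC3

theorem stmt_10 (n : ℕ) (hn : 4 < n) (a b c d e f g A B C : ℤ → ℝ)
    (hg : ∀ i : ℤ, 1 ≤ i → i ≤ (n : ℤ) - 3 → g i ≠ 0)
    (hg1 : g ((n : ℤ) - 2) = 1) (hg2 : g ((n : ℤ) - 1) = 1) (hg3 : g (n : ℤ) = 1)
    (hf1 : f ((n : ℤ) - 1) = 0) (hf2 : f (n : ℤ) = 0) (he1 : e (n : ℤ) = 0)
    (hA : SevenTermRec n a b c d e f g A) (hA1 : A 1 = 0) (hA2 : A 2 = 0) (hA3 : A 3 = 1)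
    (hB : SevenTermRec n a b c d e f g B) (hB1 : B 1 = 0) (hB2 : B 2 = 1) (hB3 : B 3 = 0)
    (hC : SevenTermRec n a b c d e f g C) (hC1 : C 1 = 1) (hC2 : C 2 = 0) (hC3 : C 3 = 0) :
    IsUnit (heptaMatrix n a b c d e f g).det ↔
      det3 A B C ((n : ℤ) + 1) ((n : ℤ) + 2) ((n : ℤ) + 3) ≠ 0 :=
  stmt_10_general n hn a b c d e f g A B C hg hg1 hg2 hg3 hA hA1 hA2 hA3 hB hB1 hB2 hB3 hC hC1 hC2
    hC3
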